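/- In the annotated nested sequent calculus for GL (allowing cuts on a fixed formula A), the cherry-pick rule is admissible: if Γ{Δ{◇A⊥_Σ}} is derivable with cuts on A, then Γ{Δ{·}, ◇A⊥_Σ} is derivable with cuts on A; that is, an annotated diamond formula can be pulled out of a subcontext to the surrounding position. -/
import Mathlib


/-- Formulas of GL in negation normal form. -/
inductive Formula : Type where
  | pos : ℕ → Formula
  | neg : ℕ → Formula
  | and : Formula → Formula → Formula
  | or  : Formula → Formula → Formula
  | box : Formula → Formula
  | dia : Formula → Formula
deriving DecidableEq

/-- Negation `A⊥` of a formula, via De Morgan duality. -/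
def Formula.negate : Formula → Formula
  | .pos a => .neg a
  | .neg a => .pos a
  | .and A B => .or A.negate B.negate
  | .or A B => .and A.negate B.negate
  | .box A => .dia A.negate
  | .dia A => .box A.negate

/-- An element of a nested sequent: a formula or a nested (bracketed) sequent. -/
inductive SeqElem : Type where
  | fml : Formula → SeqElem
  | nest : List SeqElem → SeqElem

/-- A nested sequent. -/
abbrev Sequent := List SeqElem

/-- Unary contexts: a nested sequent with a single hole. -/
inductive Ctx : Type where
  | hole : Sequent → Ctx
  | nest : Sequent → Ctx → Ctx

/-- Fill the hole of a context with a sequent. -/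
def Ctx.fill : Ctx → Sequent → Sequent
  | .hole Δ, Γ => Δ ++ Γ
  | .nest Δ c, Γ => .nest (c.fill Γ) :: Δ

/-- Depth of a context: number of brackets surrounding the hole. -/
def Ctx.depth : Ctx → ℕ
  | .hole _ => 0
  | .nest _ c => c.depth + 1

/-- Equivalence of nested sequents up to (deep) exchange. -/
inductive SeqEquiv : Sequent → Sequent → Prop where
  | nil : SeqEquiv [] []
  | cons {e : SeqElem} {Γ Δ : Sequent} : SeqEquiv Γ Δ → SeqEquiv (e :: Γ) (e :: Δ)
  | consNest {Γ' Δ' Γ Δ : Sequent} :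
      SeqEquiv Γ' Δ' → SeqEquiv Γ Δ → SeqEquiv (.nest Γ' :: Γ) (.nest Δ' :: Δ)
  | swap (a b : SeqElem) (Γ : Sequent) : SeqEquiv (a :: b :: Γ) (b :: a :: Γ)
  | trans {Γ Δ Θ : Sequent} : SeqEquiv Γ Δ → SeqEquiv Δ Θ → SeqEquiv Γ Θ

/-- `DerivH n Γ`: `Γ` has a cut-free derivation of height at most `n`. -/
inductive DerivH : ℕ → Sequent → Prop where
  | id (n : ℕ) (c : Ctx) (a : ℕ) :
      DerivH n (c.fill [.fml (.pos a), .fml (.neg a)])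
  | and {n : ℕ} {c : Ctx} {A B : Formula} :
      DerivH n (c.fill [.fml A]) → DerivH n (c.fill [.fml B]) →
      DerivH (n + 1) (c.fill [.fml (.and A B)])
  | or {n : ℕ} {c : Ctx} {A B : Formula} :
      DerivH n (c.fill [.fml A, .fml B]) →
      DerivH (n + 1) (c.fill [.fml (.or A B)])
  | box {n : ℕ} {c : Ctx} {A : Formula} :
      DerivH n (c.fill [.nest [.fml (.dia A.negate), .fml A]]) →
      DerivH (n + 1) (c.fill [.fml (.box A)])
  | dia {n : ℕ} (c d : Ctx) {A : Formula} :
      0 < d.depth →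
      DerivH n (c.fill (d.fill [.fml A] ++ [.fml (.dia A)])) →
      DerivH (n + 1) (c.fill (d.fill [] ++ [.fml (.dia A)]))
  | exch {n : ℕ} {Γ Δ : Sequent} : SeqEquiv Γ Δ → DerivH n Γ → DerivH n Δ
  | up {n : ℕ} {Γ : Sequent} : DerivH n Γ → DerivH (n + 1) Γ

/-- Derivability where cut is permitted on formulas satisfying `P`. -/
inductive DerivWith (P : Formula → Prop) : Sequent → Prop where
  | id (c : Ctx) (a : ℕ) :
      DerivWith P (c.fill [.fml (.pos a), .fml (.neg a)])
  | and {c : Ctx} {A B : Formula} :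
      DerivWith P (c.fill [.fml A]) → DerivWith P (c.fill [.fml B]) →
      DerivWith P (c.fill [.fml (.and A B)])
  | or {c : Ctx} {A B : Formula} :
      DerivWith P (c.fill [.fml A, .fml B]) →
      DerivWith P (c.fill [.fml (.or A B)])
  | box {c : Ctx} {A : Formula} :
      DerivWith P (c.fill [.nest [.fml (.dia A.negate), .fml A]]) →
      DerivWith P (c.fill [.fml (.box A)])
  | dia (c d : Ctx) {A : Formula} :
      0 < d.depth →
      DerivWith P (c.fill (d.fill [.fml A] ++ [.fml (.dia A)])) →
      DerivWith P (c.fill (d.fill [] ++ [.fml (.dia A)]))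
  | cut {c : Ctx} {A : Formula} : P A →
      DerivWith P (c.fill [.fml A]) → DerivWith P (c.fill [.fml A.negate]) →
      DerivWith P (c.fill [])
  | exch {Γ Δ : Sequent} : SeqEquiv Γ Δ → DerivWith P Γ → DerivWith P Δ

/-- Cut-free derivability. -/
abbrev Deriv : Sequent → Prop := DerivWith (fun _ => False)
/-- Elements of an annotated nested sequent: ordinary formulas, diamond
formulas `◇A_Σ` annotated with a finite set of formulas, and brackets
`[Δ]_B` annotated with a formula. -/
inductive AElem : Type where
  | fml : Formula → AElem
  | dia : Formula → Finset Formula → AElem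
  | nest : Formula → List AElem → AElem

/-- Annotated nested sequents. -/
abbrev ASeq := List AElem

/-- Annotated unary contexts. -/
inductive ACtx : Type where
  | hole : ASeq → ACtx
  | nest : Formula → ASeq → ACtx → ACtx

def ACtx.fill : ACtx → ASeq → ASeq
  | .hole Δ, Γ => Δ ++ Γ
  | .nest B Δ c, Γ => .nest B (c.fill Γ) :: Δ

/-- Formula occurrence as an annotated element: a diamond formula carries the
annotation set `s`, any other formula is unannotated. -/
def emb (A : Formula) (s : Finset Formula) : AElem :=
  match A with
  | .dia C => .dia C s
  | _ => .fml A

mutual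
/-- All diamond annotation sets in the element are empty. -/
def AElem.diaEmpty : AElem → Prop
  | .fml _ => True
  | .dia _ s => s = ∅
  | .nest _ Δ => ASeq.diaEmpty Δ
/-- All diamond annotation sets in the sequent are empty. -/
def ASeq.diaEmpty : ASeq → Prop
  | [] => True
  | e :: Δ => e.diaEmpty ∧ ASeq.diaEmpty Δ
end

mutual
/-- The element contains no bracket annotated with `B`. -/
def AElem.noBr (B : Formula) : AElem → Prop
  | .fml _ => True
  | .dia _ _ => True
  | .nest C Δ => C ≠ B ∧ ASeq.noBr B Δ
/-- The sequent contains no bracket annotated with `B`. -/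
def ASeq.noBr (B : Formula) : ASeq → Prop
  | [] => True
  | e :: Δ => e.noBr B ∧ ASeq.noBr B Δ
end

mutual
/-- The operation `(−)⁺`: weaken every bracket `[Δ']_C` to `[Δ'⁺, ◇C⊥]_C`. -/
def AElem.plus : AElem → AElem
  | .fml A => .fml A
  | .dia A s => .dia A s
  | .nest C Δ => .nest C (AElem.dia C.negate ∅ :: ASeq.plus Δ)
def ASeq.plus : ASeq → ASeq
  | [] => []
  | e :: Δ => e.plus :: ASeq.plus Δ
end

mutual
/-- Erase all annotations. -/
def AElem.erase : AElem → SeqElem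
  | .fml A => .fml A
  | .dia A _ => .fml (.dia A)
  | .nest _ Δ => .nest (ASeq.erase Δ)
def ASeq.erase : ASeq → Sequent
  | [] => []
  | e :: Δ => e.erase :: ASeq.erase Δ
end

/-- Equivalence of annotated sequents up to (deep) exchange. -/
inductive AEquiv : ASeq → ASeq → Prop where
  | nil : AEquiv [] []
  | cons {e : AElem} {Γ Δ : ASeq} : AEquiv Γ Δ → AEquiv (e :: Γ) (e :: Δ)
  | consNest {B : Formula} {Γ' Δ' Γ Δ : ASeq} :
      AEquiv Γ' Δ' → AEquiv Γ Δ → AEquiv (.nest B Γ' :: Γ) (.nest B Δ' :: Δ)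
  | swap (a b : AElem) (Γ : ASeq) : AEquiv (a :: b :: Γ) (b :: a :: Γ)
  | trans {Γ Δ Θ : ASeq} : AEquiv Γ Δ → AEquiv Δ Θ → AEquiv Γ Θ

/-- Merging two annotated sequents with the same underlying skeleton and
identical bracket annotations: diamond annotation sets are unioned. -/
inductive AMerge : ASeq → ASeq → ASeq → Prop where
  | nil : AMerge [] [] []
  | fml {C : Formula} {Γ₁ Γ₂ Γ : ASeq} :
      AMerge Γ₁ Γ₂ Γ → AMerge (.fml C :: Γ₁) (.fml C :: Γ₂) (.fml C :: Γ)
  | dia {A : Formula} {s₁ s₂ : Finset Formula} {Γ₁ Γ₂ Γ : ASeq} :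
      AMerge Γ₁ Γ₂ Γ →
      AMerge (.dia A s₁ :: Γ₁) (.dia A s₂ :: Γ₂) (.dia A (s₁ ∪ s₂) :: Γ)
  | nest {B : Formula} {Δ₁ Δ₂ Δ Γ₁ Γ₂ Γ : ASeq} :
      AMerge Δ₁ Δ₂ Δ → AMerge Γ₁ Γ₂ Γ →
      AMerge (.nest B Δ₁ :: Γ₁) (.nest B Δ₂ :: Γ₂) (.nest B Δ :: Γ)

/-- Merging two annotated contexts. -/
inductive ACtxMerge : ACtx → ACtx → ACtx → Prop where
  | hole {Δ₁ Δ₂ Δ : ASeq} : AMerge Δ₁ Δ₂ Δ →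
      ACtxMerge (.hole Δ₁) (.hole Δ₂) (.hole Δ)
  | nest {B : Formula} {Δ₁ Δ₂ Δ : ASeq} {c₁ c₂ c : ACtx} :
      AMerge Δ₁ Δ₂ Δ → ACtxMerge c₁ c₂ c →
      ACtxMerge (.nest B Δ₁ c₁) (.nest B Δ₂ c₂) (.nest B Δ c)

/-- Annotated derivability, with cut permitted on formulas satisfying `P`. -/
inductive ADeriv (P : Formula → Prop) : ASeq → Prop where
  | id {c : ACtx} {a : ℕ} :
      ASeq.diaEmpty (c.fill [.fml (.pos a), .fml (.neg a)]) →
      ADeriv P (c.fill [.fml (.pos a), .fml (.neg a)])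
  | and {c₁ c₂ c : ACtx} {A B : Formula} {s₁ s₂ : Finset Formula} :
      ACtxMerge c₁ c₂ c →
      ADeriv P (c₁.fill [emb A s₁]) → ADeriv P (c₂.fill [emb B s₂]) →
      ADeriv P (c.fill [.fml (.and A B)])
  | or {c : ACtx} {A B : Formula} {s₁ s₂ : Finset Formula} :
      ADeriv P (c.fill [emb A s₁, emb B s₂]) →
      ADeriv P (c.fill [.fml (.or A B)])
  | box {c : ACtx} {A : Formula} {S : Finset Formula} {s : Finset Formula} :
      ADeriv P (c.fill [.nest A [.dia A.negate S, emb A s]]) →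
      ADeriv P (c.fill [.fml (.box A)])
  | dia {c d : ACtx} {A B : Formula} {S s : Finset Formula} {Δ' : ASeq} :
      ADeriv P (c.fill (d.fill [.nest B (emb A s :: Δ')] ++ [.dia A S])) →
      ADeriv P (c.fill (d.fill [.nest B Δ'] ++ [.dia A (insert B S)]))
  | cut {c₁ c₂ c : ACtx} {A : Formula} {s₁ s₂ : Finset Formula} :
      P A → ACtxMerge c₁ c₂ c →
      ADeriv P (c₁.fill [emb A s₁]) → ADeriv P (c₂.fill [emb A.negate s₂]) →
      ADeriv P (c.fill [])
  | exch {Γ Δ : ASeq} : AEquiv Γ Δ → ADeriv P Γ → ADeriv P Δ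


/-! ### Auxiliary development for cherry-pick admissibility -/

namespace AEquiv

theorem refl : ∀ Γ : ASeq, AEquiv Γ Γ
  | [] => .nil
  | _ :: Γ => .cons (refl Γ)

theorem symm {Γ Δ : ASeq} (h : AEquiv Γ Δ) : AEquiv Δ Γ := by
  induction h with
  | nil => exact .nil
  | cons _ ih => exact .cons ih
  | consNest _ _ ih1 ih2 => exact .consNest ih1 ih2
  | swap a b Γ => exact .swap b a Γ
  | trans _ _ ih1 ih2 => exact .trans ih2 ih1

theorem appendR {Γ Δ : ASeq} (T : ASeq) (h : AEquiv Γ Δ) :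
    AEquiv (Γ ++ T) (Δ ++ T) := by
  induction h with
  | nil => exact refl T
  | cons _ ih => exact .cons ih
  | consNest h1 _ _ ih2 => exact .consNest h1 ih2
  | swap a b Γ => exact .swap a b (Γ ++ T)
  | trans _ _ ih1 ih2 => exact .trans ih1 ih2

theorem appendL {Γ Δ : ASeq} (T : ASeq) (h : AEquiv Γ Δ) :
    AEquiv (T ++ Γ) (T ++ Δ) := by
  induction T with
  | nil => exact h
  | cons a T ih => exact .cons ih

theorem mid (x : AElem) (Δ Λ : ASeq) : AEquiv (x :: (Δ ++ Λ)) (Δ ++ x :: Λ) := by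
  induction Δ with
  | nil => exact refl _
  | cons a Δ ih => exact .trans (.swap x a _) (.cons ih)

theorem comm (T Z : ASeq) : AEquiv (T ++ Z) (Z ++ T) := by
  induction T with
  | nil => simpa using refl Z
  | cons t T ih => exact .trans (.cons ih) (mid t Z T)

end AEquiv

theorem fillCong (c : ACtx) {Z Z' : ASeq} (h : AEquiv Z Z') :
    AEquiv (c.fill Z) (c.fill Z') := by
  induction c with
  | hole Δ => exact AEquiv.appendL Δ h
  | nest B Δ c ih => exact .consNest ih (AEquiv.refl Δ)

/-- Prepend a list of elements (up to exchange) in front of a context. -/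
def ACtx.prep (Δ : ASeq) : ACtx → ACtx
  | .hole Δ' => .hole (Δ ++ Δ')
  | .nest B Δ' c => .nest B (Δ' ++ Δ) c

theorem prep_fill (Δ : ASeq) (d : ACtx) (Z : ASeq) :
    AEquiv ((d.prep Δ).fill Z) (Δ ++ d.fill Z) := by
  cases d with
  | hole Δ' => simp only [ACtx.prep, ACtx.fill, List.append_assoc]; exact AEquiv.refl _
  | nest B Δ' c =>
      simp only [ACtx.prep, ACtx.fill]
      exact .trans (.cons (AEquiv.comm Δ' Δ)) (AEquiv.mid _ Δ Δ')

/-- Append a list of elements (up to exchange) after the hole of a context. -/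
def ACtx.happ : ACtx → ASeq → ACtx
  | .hole Δ, T => .hole (Δ ++ T)
  | .nest B Δ c, T => .nest B Δ (c.happ T)

theorem happ_fill (d : ACtx) (T Z : ASeq) :
    AEquiv ((d.happ T).fill Z) (d.fill (Z ++ T)) := by
  induction d with
  | hole Δ =>
      simp only [ACtx.happ, ACtx.fill, List.append_assoc]
      exact AEquiv.appendL Δ (AEquiv.comm T Z)
  | nest B Δ c ih => exact .consNest ih (AEquiv.refl Δ)

/-- Composition of contexts, correct up to exchange. -/
def ACtx.comp : ACtx → ACtx → ACtx
  | .hole Δ, d => d.prep Δ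
  | .nest B Δ c, d => .nest B Δ (c.comp d)

theorem comp_fill (c d : ACtx) (Z : ASeq) :
    AEquiv ((c.comp d).fill Z) (c.fill (d.fill Z)) := by
  induction c with
  | hole Δ => exact prep_fill Δ d Z
  | nest B Δ c ih => exact .consNest ih (AEquiv.refl Δ)

/-- One step of "cherry-picking": a diamond element is pulled out of a bracket
to the position directly following that bracket. -/
inductive Pull : ASeq → ASeq → Prop where
  | here {B E : Formula} {T : Finset Formula} {Θ₁ Θ₂ Λ : ASeq} :
      Pull (.nest B (Θ₁ ++ .dia E T :: Θ₂) :: Λ) (.nest B (Θ₁ ++ Θ₂) :: .dia E T :: Λ)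
  | cons {e : AElem} {Λ Λ' : ASeq} : Pull Λ Λ' → Pull (e :: Λ) (e :: Λ')
  | nest {B : Formula} {Θ Θ' Λ : ASeq} : Pull Θ Θ' → Pull (.nest B Θ :: Λ) (.nest B Θ' :: Λ)

theorem pull_appendR {Λ Λ' : ASeq} (h : Pull Λ Λ') (T : ASeq) :
    Pull (Λ ++ T) (Λ' ++ T) := by
  induction h with
  | here => exact .here
  | cons _ ih => exact .cons ih
  | nest p => exact .nest p

theorem pull_appendL {Λ Λ' : ASeq} (h : Pull Λ Λ') (Δ : ASeq) :
    Pull (Δ ++ Λ) (Δ ++ Λ') := by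
  induction Δ with
  | nil => exact h
  | cons a Δ ih => exact .cons ih

theorem pull_fill {Λ Λ' : ASeq} (h : Pull Λ Λ') (c : ACtx) :
    Pull (c.fill Λ) (c.fill Λ') := by
  induction c with
  | hole Δ => exact pull_appendL h Δ
  | nest B Δ c ih => exact .nest ih

theorem pull_append_split {Δ Λ Γ' : ASeq} (p : Pull (Δ ++ Λ) Γ') :
    (∃ Δ', Pull Δ Δ' ∧ Γ' = Δ' ++ Λ) ∨ (∃ Λ', Pull Λ Λ' ∧ Γ' = Δ ++ Λ') := by
  induction Δ generalizing Γ' with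
  | nil => exact .inr ⟨Γ', p, rfl⟩
  | cons a Δ ih =>
      cases p with
      | here => exact .inl ⟨_ :: _ :: Δ, .here, rfl⟩
      | cons p' =>
          rcases ih p' with ⟨Δ', h, rfl⟩ | ⟨Λ', h, rfl⟩
          · exact .inl ⟨a :: Δ', .cons h, rfl⟩
          · exact .inr ⟨Λ', h, rfl⟩
      | nest p' => exact .inl ⟨_ :: Δ, .nest p', rfl⟩

theorem diaEmpty_append {a b : ASeq} :
    ASeq.diaEmpty (a ++ b) ↔ ASeq.diaEmpty a ∧ ASeq.diaEmpty b := by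
  induction a with
  | nil => simp [ASeq.diaEmpty]
  | cons e a ih => simp [ASeq.diaEmpty, ih, and_assoc]

theorem pull_diaEmpty {Γ Γ' : ASeq} (p : Pull Γ Γ') (h : ASeq.diaEmpty Γ) :
    ASeq.diaEmpty Γ' := by
  induction p with
  | here =>
      simp only [ASeq.diaEmpty, AElem.diaEmpty, diaEmpty_append] at h ⊢
      tauto
  | cons _ ih =>
      simp only [ASeq.diaEmpty] at h ⊢
      exact ⟨h.1, ih h.2⟩
  | nest p ih =>
      simp only [ASeq.diaEmpty, AElem.diaEmpty] at h ⊢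
      exact ⟨ih h.1, h.2⟩

theorem aequiv_track {Γ Δ : ASeq} (h : AEquiv Γ Δ) :
    ∀ {Θ₁ Θ₂ : ASeq} {E : Formula} {T : Finset Formula},
      Δ = Θ₁ ++ .dia E T :: Θ₂ →
      ∃ Ξ₁ Ξ₂, Γ = Ξ₁ ++ .dia E T :: Ξ₂ ∧ AEquiv (Ξ₁ ++ Ξ₂) (Θ₁ ++ Θ₂) := by
  induction h with
  | nil => intro Θ₁ Θ₂ E T hEq; simp at hEq
  | @cons e Γ Δ h ih =>
      intro Θ₁ Θ₂ E T hEq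
      cases Θ₁ with
      | nil =>
          simp only [List.nil_append, List.cons.injEq] at hEq
          exact ⟨[], Γ, by simp [hEq.1], by simpa [hEq.2] using h⟩
      | cons t Θ₁ =>
          simp only [List.cons_append, List.cons.injEq] at hEq
          obtain ⟨Ξ₁, Ξ₂, rfl, he⟩ := ih hEq.2
          exact ⟨t :: Ξ₁, Ξ₂, by simp [hEq.1], .cons he⟩
  | @consNest B Γ' Δ' Γ Δ h1 h2 ih1 ih2 =>
      intro Θ₁ Θ₂ E T hEq
      cases Θ₁ with
      | nil => simp at hEq
      | cons t Θ₁ =>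
          simp only [List.cons_append, List.cons.injEq] at hEq
          obtain ⟨Ξ₁, Ξ₂, rfl, he⟩ := ih2 hEq.2
          exact ⟨.nest B Γ' :: Ξ₁, Ξ₂, by simp, by
            rw [← hEq.1]; exact .consNest h1 he⟩
  | swap a b Γ =>
      intro Θ₁ Θ₂ E T hEq
      match Θ₁, hEq with
      | [], hEq =>
          simp only [List.nil_append, List.cons.injEq] at hEq
          obtain ⟨rfl, rfl⟩ := hEq
          exact ⟨[a], Γ, rfl, AEquiv.refl _⟩
      | [x], hEq =>
          simp only [List.cons_append, List.nil_append, List.cons.injEq] at hEq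
          obtain ⟨rfl, rfl, rfl⟩ := hEq
          exact ⟨[], b :: Γ, rfl, AEquiv.refl _⟩
      | x :: y :: Θ₁, hEq =>
          simp only [List.cons_append, List.cons.injEq] at hEq
          obtain ⟨rfl, rfl, hEq⟩ := hEq
          subst hEq
          exact ⟨a :: b :: Θ₁, Θ₂, rfl, .swap _ _ _⟩
  | trans h1 h2 ih1 ih2 =>
      intro Θ₁ Θ₂ E T hEq
      obtain ⟨Ξ₁, Ξ₂, rfl, he⟩ := ih2 hEq
      obtain ⟨Ψ₁, Ψ₂, rfl, he'⟩ := ih1 rfl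
      exact ⟨Ψ₁, Ψ₂, rfl, .trans he' he⟩

theorem aequiv_pull {Γ Δ : ASeq} (h : AEquiv Γ Δ) :
    ∀ {Δ'}, Pull Δ Δ' → ∃ Γ', Pull Γ Γ' ∧ AEquiv Γ' Δ' := by
  induction h with
  | nil => intro Δ' p; cases p
  | @cons e Γ Δ h ih =>
      intro Δ' p
      cases p with
      | here => exact ⟨_, .here, .cons (.cons h)⟩
      | cons p' =>
          obtain ⟨Γ'', hp, he⟩ := ih p'
          exact ⟨e :: Γ'', .cons hp, .cons he⟩
      | nest p' => exact ⟨_, .nest p', .consNest (AEquiv.refl _) h⟩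
  | @consNest B Γ₁ Δ₁ Γ₂ Δ₂ h1 h2 ih1 ih2 =>
      intro Δ' p
      cases p with
      | here =>
          obtain ⟨Ξ₁, Ξ₂, rfl, he⟩ := aequiv_track h1 rfl
          exact ⟨_, .here, .consNest he (.cons h2)⟩
      | cons p' =>
          obtain ⟨Γ'', hp, he⟩ := ih2 p'
          exact ⟨_, .cons hp, .consNest h1 he⟩
      | nest p' =>
          obtain ⟨Γ'', hp, he⟩ := ih1 p'
          exact ⟨_, .nest hp, .consNest he h2⟩
  | swap a b Γ =>
      intro Δ' p
      cases p with
      | here =>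
          exact ⟨_, .cons .here, .trans (.swap _ _ _) (.cons (.swap _ _ _))⟩
      | cons p' =>
          cases p' with
          | here =>
              exact ⟨_, .here, .trans (.cons (.swap _ _ _)) (.swap _ _ _)⟩
          | cons p'' => exact ⟨_, .cons (.cons p''), .swap _ _ _⟩
          | nest p'' => exact ⟨_, .nest p'', .swap _ _ _⟩
      | nest p' => exact ⟨_, .cons (.nest p'), .swap _ _ _⟩
  | trans h1 h2 ih1 ih2 =>
      intro Δ' p
      obtain ⟨Γ₀', hp₀, he₀⟩ := ih2 p
      obtain ⟨Γ', hp, he⟩ := ih1 hp₀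
      exact ⟨Γ', hp, .trans he he₀⟩

/-- Deletion of a top-level element (at the outermost level) of a context. -/
inductive DelTop (e : AElem) : ACtx → ACtx → Prop where
  | hole {Δ₁ Δ₂ : ASeq} : DelTop e (.hole (Δ₁ ++ e :: Δ₂)) (.hole (Δ₁ ++ Δ₂))
  | nest {B : Formula} {Δ₁ Δ₂ : ASeq} {c : ACtx} :
      DelTop e (.nest B (Δ₁ ++ e :: Δ₂) c) (.nest B (Δ₁ ++ Δ₂) c)

theorem delTop_fill {e : AElem} {c c' : ACtx} (h : DelTop e c c') (Λ : ASeq) :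
    ∃ Ξ₁ Ξ₂, c.fill Λ = Ξ₁ ++ e :: Ξ₂ ∧ c'.fill Λ = Ξ₁ ++ Ξ₂ := by
  cases h with
  | @hole Δ₁ Δ₂ => exact ⟨Δ₁, Δ₂ ++ Λ, by simp [ACtx.fill], by simp [ACtx.fill]⟩
  | @nest B Δ₁ Δ₂ c => exact ⟨.nest B (c.fill Λ) :: Δ₁, Δ₂, by simp [ACtx.fill], by simp [ACtx.fill]⟩

theorem list_split {α : Type} {a b x y : List α} {e : α} (h : a ++ b = x ++ e :: y) :
    (∃ y', a = x ++ e :: y' ∧ y = y' ++ b) ∨ (∃ x', b = x' ++ e :: y ∧ x = a ++ x') := by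
  induction a generalizing x with
  | nil => exact .inr ⟨x, h, by simp⟩
  | cons a₀ a ih =>
      cases x with
      | nil =>
          simp only [List.nil_append, List.cons_append, List.cons.injEq] at h
          exact .inl ⟨a, by simp [h.1], h.2.symm⟩
      | cons x₀ x =>
          simp only [List.cons_append, List.cons.injEq] at h
          rcases ih h.2 with ⟨y', h1, h2⟩ | ⟨x', h1, h2⟩
          · exact .inl ⟨y', by simp [h.1, h1], h2⟩
          · exact .inr ⟨x', h1, by simp [h.1, h2]⟩

theorem splitTop {c : ACtx} {Λ Θ₁ Θ₂ : ASeq} {E : Formula} {T : Finset Formula}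
    (h : c.fill Λ = Θ₁ ++ .dia E T :: Θ₂) :
    (∃ c', DelTop (.dia E T) c c' ∧ c'.fill Λ = Θ₁ ++ Θ₂) ∨
    (∃ Δh Λ₁ Λ₂, c = .hole Δh ∧ Λ = Λ₁ ++ .dia E T :: Λ₂ ∧ Θ₁ = Δh ++ Λ₁ ∧ Θ₂ = Λ₂) := by
  cases c with
  | hole Δh =>
      simp only [ACtx.fill] at h
      rcases list_split h with ⟨y', h1, h2⟩ | ⟨x', h1, h2⟩
      · subst h1
        exact .inl ⟨.hole (Θ₁ ++ y'), .hole, by simp [ACtx.fill, h2]⟩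
      · exact .inr ⟨Δh, x', Θ₂, rfl, h1, h2, rfl⟩
  | nest B Δs c₀ =>
      cases Θ₁ with
      | nil => simp [ACtx.fill] at h
      | cons t Θ₁ =>
          simp only [ACtx.fill, List.cons_append, List.cons.injEq] at h
          obtain ⟨h1, h2⟩ := h
          subst h1; subst h2
          exact .inl ⟨.nest B (Θ₁ ++ Θ₂) c₀, .nest, by simp [ACtx.fill]⟩

/-- One step of cherry-picking carried out entirely inside a context. -/
inductive CPull : ACtx → ACtx → Prop where
  | holeP {Δ Δ' : ASeq} : Pull Δ Δ' → CPull (.hole Δ) (.hole Δ')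
  | sideP {B : Formula} {Δ Δ' : ASeq} {c : ACtx} :
      Pull Δ Δ' → CPull (.nest B Δ c) (.nest B Δ' c)
  | deep {B : Formula} {Δ : ASeq} {c c' : ACtx} :
      CPull c c' → CPull (.nest B Δ c) (.nest B Δ c')
  | cross {B E : Formula} {T : Finset Formula} {Δ : ASeq} {c c' : ACtx} :
      DelTop (.dia E T) c c' → CPull (.nest B Δ c) (.nest B (.dia E T :: Δ) c')

theorem cpull_pull {c c' : ACtx} (h : CPull c c') (Λ : ASeq) :
    Pull (c.fill Λ) (c'.fill Λ) := by
  induction h with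
  | holeP p => exact pull_appendR p Λ
  | sideP p => exact .cons p
  | deep _ ih => exact .nest ih
  | @cross B E T Δ c₀ c₀' del =>
      obtain ⟨Ξ₁, Ξ₂, h1, h2⟩ := delTop_fill del Λ
      show Pull (.nest B (c₀.fill Λ) :: Δ) (.nest B (c₀'.fill Λ) :: .dia E T :: Δ)
      rw [h1, h2]
      exact .here

theorem pull_fill_inv : ∀ (c : ACtx) {Λ Γ' : ASeq}, Pull (c.fill Λ) Γ' →
    (∃ c', CPull c c' ∧ Γ' = c'.fill Λ) ∨
    (∃ Λ', Pull Λ Λ' ∧ Γ' = c.fill Λ') ∨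
    (∃ (cp : ACtx) (B0 : Formula) (Δs Δh Λ₁ Λ₂ : ASeq) (E : Formula) (T : Finset Formula),
       Λ = Λ₁ ++ .dia E T :: Λ₂ ∧
       Γ' = cp.fill (.nest B0 (Δh ++ (Λ₁ ++ Λ₂)) :: .dia E T :: Δs) ∧
       ∀ (E' : Formula) (T' : Finset Formula) (Z₁ Z₂ : ASeq),
         Pull (c.fill (Z₁ ++ .dia E' T' :: Z₂))
              (cp.fill (.nest B0 (Δh ++ (Z₁ ++ Z₂)) :: .dia E' T' :: Δs))) := by
  intro c
  induction c with
  | hole Δ =>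
      intro Λ Γ' p
      rcases pull_append_split p with ⟨Δ', h, rfl⟩ | ⟨Λ', h, rfl⟩
      · exact .inl ⟨.hole Δ', .holeP h, rfl⟩
      · exact .inr (.inl ⟨Λ', h, rfl⟩)
  | nest B Δs c₀ ih =>
      intro Λ Γ' p
      replace p : Pull (.nest B (c₀.fill Λ) :: Δs) Γ' := p
      generalize hK : c₀.fill Λ = K at p
      cases p with
      | cons p' =>
          subst hK
          exact .inl ⟨.nest B _ c₀, .sideP p', rfl⟩
      | nest p' =>
          subst hK
          rcases ih p' with ⟨c₀', h, rfl⟩ | ⟨Λ', h, rfl⟩ |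
            ⟨cp, B0, Δs', Δh, Λ₁, Λ₂, E, T, hΛ, hΓ, hprop⟩
          · exact .inl ⟨.nest B Δs c₀', .deep h, rfl⟩
          · exact .inr (.inl ⟨Λ', h, rfl⟩)
          · refine .inr (.inr ⟨.nest B Δs cp, B0, Δs', Δh, Λ₁, Λ₂, E, T, hΛ,
              by rw [hΓ]; rfl, ?_⟩)
            intro E' T' Z₁ Z₂
            exact .nest (hprop E' T' Z₁ Z₂)
      | @here _ E T Θ₁ Θ₂ _ =>
          rcases splitTop hK with ⟨c₀', del, hfill⟩ | ⟨Δh, Λ₁, Λ₂, hc, hΛ, hΘ₁, hΘ₂⟩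
          · refine .inl ⟨.nest B (.dia E T :: Δs) c₀', .cross del, ?_⟩
            show _ = ACtx.fill (.nest B (.dia E T :: Δs) c₀') Λ
            simp only [ACtx.fill, hfill]
          · subst hc
            refine .inr (.inr ⟨.hole [], B, Δs, Δh, Λ₁, Λ₂, E, T, hΛ, ?_, ?_⟩)
            · show _ = [] ++ _
              rw [hΘ₁, hΘ₂]
              simp [List.append_assoc]
            · intro E' T' Z₁ Z₂
              show Pull (.nest B (Δh ++ (Z₁ ++ .dia E' T' :: Z₂)) :: Δs)
                ([] ++ .nest B (Δh ++ (Z₁ ++ Z₂)) :: .dia E' T' :: Δs)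
              simp only [List.nil_append, ← List.append_assoc]
              exact .here

theorem amerge_append {a₁ a₂ a b₁ b₂ b : ASeq} (h : AMerge a₁ a₂ a)
    (h' : AMerge b₁ b₂ b) : AMerge (a₁ ++ b₁) (a₂ ++ b₂) (a ++ b) := by
  induction h with
  | nil => exact h'
  | fml _ ih => exact .fml ih
  | dia _ ih => exact .dia ih
  | nest hD hT ihD ihT => exact .nest hD ihT

theorem merge_split {Θ₁ : ASeq} {Γ₁ Γ₂ Θ₂ : ASeq} {E : Formula} {T : Finset Formula}
    (m : AMerge Γ₁ Γ₂ (Θ₁ ++ .dia E T :: Θ₂)) :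
    ∃ X₁ T₁ Y₁ X₂ T₂ Y₂, Γ₁ = X₁ ++ .dia E T₁ :: Y₁ ∧ Γ₂ = X₂ ++ .dia E T₂ :: Y₂ ∧
      T₁ ∪ T₂ = T ∧ AMerge X₁ X₂ Θ₁ ∧ AMerge Y₁ Y₂ Θ₂ := by
  induction Θ₁ generalizing Γ₁ Γ₂ with
  | nil =>
      cases m with
      | dia m' => exact ⟨[], _, _, [], _, _, rfl, rfl, rfl, .nil, m'⟩
  | cons t Θ₁ ih =>
      cases m with
      | fml m' =>
          obtain ⟨X₁, T₁, Y₁, X₂, T₂, Y₂, rfl, rfl, hT, mX, mY⟩ := ih m'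
          exact ⟨_ :: X₁, T₁, Y₁, _ :: X₂, T₂, Y₂, rfl, rfl, hT, .fml mX, mY⟩
      | dia m' =>
          obtain ⟨X₁, T₁, Y₁, X₂, T₂, Y₂, rfl, rfl, hT, mX, mY⟩ := ih m'
          exact ⟨_ :: X₁, T₁, Y₁, _ :: X₂, T₂, Y₂, rfl, rfl, hT, .dia mX, mY⟩
      | nest hD m' =>
          obtain ⟨X₁, T₁, Y₁, X₂, T₂, Y₂, rfl, rfl, hT, mX, mY⟩ := ih m'
          exact ⟨_ :: X₁, T₁, Y₁, _ :: X₂, T₂, Y₂, rfl, rfl, hT, .nest hD mX, mY⟩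

theorem amerge_pull {Γ₁ Γ₂ Γ : ASeq} (m : AMerge Γ₁ Γ₂ Γ) :
    ∀ {Γ'}, Pull Γ Γ' →
      ∃ Γ₁' Γ₂', Pull Γ₁ Γ₁' ∧ Pull Γ₂ Γ₂' ∧ AMerge Γ₁' Γ₂' Γ' := by
  induction m with
  | nil => intro Γ' p; cases p
  | fml _ ih =>
      intro Γ' p
      cases p with
      | cons p' =>
          obtain ⟨Γ₁', Γ₂', p₁, p₂, m'⟩ := ih p'
          exact ⟨_, _, .cons p₁, .cons p₂, .fml m'⟩
  | dia _ ih =>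
      intro Γ' p
      cases p with
      | cons p' =>
          obtain ⟨Γ₁', Γ₂', p₁, p₂, m'⟩ := ih p'
          exact ⟨_, _, .cons p₁, .cons p₂, .dia m'⟩
  | @nest B Δ₁ Δ₂ Δ _ _ _ mD mT ihD ihT =>
      intro Γ' p
      replace p : Pull (.nest B Δ :: _) Γ' := p
      generalize hK : Δ = K at p
      cases p with
      | cons p' =>
          subst hK
          obtain ⟨Γ₁', Γ₂', p₁, p₂, m'⟩ := ihT p'
          exact ⟨_, _, .cons p₁, .cons p₂, .nest mD m'⟩
      | nest p' =>
          subst hK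
          obtain ⟨Δ₁', Δ₂', p₁, p₂, m'⟩ := ihD p'
          exact ⟨_, _, .nest p₁, .nest p₂, .nest m' mT⟩
      | @here _ E T Θ₁ Θ₂ _ =>
          subst hK
          obtain ⟨X₁, T₁, Y₁, X₂, T₂, Y₂, rfl, rfl, hT, mX, mY⟩ := merge_split mD
          refine ⟨_, _, .here, .here, ?_⟩
          rw [← hT]
          exact .nest (amerge_append mX mY) (.dia mT)

theorem deltop_merge {c₁ c₂ c c' : ACtx} {E : Formula} {T : Finset Formula}
    (m : ACtxMerge c₁ c₂ c) (del : DelTop (.dia E T) c c') :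
    ∃ T₁ T₂ c₁' c₂', T₁ ∪ T₂ = T ∧ DelTop (.dia E T₁) c₁ c₁' ∧
      DelTop (.dia E T₂) c₂ c₂' ∧ ACtxMerge c₁' c₂' c' := by
  cases del with
  | @hole Δl Δr =>
      cases m with
      | hole m' =>
          obtain ⟨X₁, T₁, Y₁, X₂, T₂, Y₂, rfl, rfl, hT, mX, mY⟩ := merge_split m'
          exact ⟨T₁, T₂, _, _, hT, .hole, .hole, .hole (amerge_append mX mY)⟩
  | @nest B Δl Δr c₀ =>
      cases m with
      | nest mS mC =>
          obtain ⟨X₁, T₁, Y₁, X₂, T₂, Y₂, rfl, rfl, hT, mX, mY⟩ := merge_split mS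
          exact ⟨T₁, T₂, _, _, hT, .nest, .nest, .nest (amerge_append mX mY) mC⟩

theorem cpull_merge {c₁ c₂ c c' : ACtx} (m : ACtxMerge c₁ c₂ c) (h : CPull c c') :
    ∃ c₁' c₂', CPull c₁ c₁' ∧ CPull c₂ c₂' ∧ ACtxMerge c₁' c₂' c' := by
  induction h generalizing c₁ c₂ with
  | holeP p =>
      cases m with
      | hole m' =>
          obtain ⟨Γ₁', Γ₂', p₁, p₂, m''⟩ := amerge_pull m' p
          exact ⟨_, _, .holeP p₁, .holeP p₂, .hole m''⟩
  | sideP p =>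
      cases m with
      | nest mS mC =>
          obtain ⟨Γ₁', Γ₂', p₁, p₂, m''⟩ := amerge_pull mS p
          exact ⟨_, _, .sideP p₁, .sideP p₂, .nest m'' mC⟩
  | deep _ ih =>
      cases m with
      | nest mS mC =>
          obtain ⟨c₁', c₂', h₁, h₂, m''⟩ := ih mC
          exact ⟨_, _, .deep h₁, .deep h₂, .nest mS m''⟩
  | cross del =>
      cases m with
      | nest mS mC =>
          obtain ⟨T₁, T₂, c₁', c₂', hT, d₁, d₂, m''⟩ := deltop_merge mC del
          refine ⟨_, _, .cross d₁, .cross d₂, ?_⟩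
          rw [← hT]
          exact .nest (.dia mS) m''

theorem emid (Δs : ASeq) (w : AElem) : AEquiv (Δs ++ [w]) (w :: Δs) := by
  simpa using (AEquiv.mid w Δs []).symm

theorem pull_adm {P : Formula → Prop} {Γ : ASeq} (h : ADeriv P Γ) :
    ∀ {Γ'}, Pull Γ Γ' → ADeriv P Γ' := by
  induction h with
  | @id c a hE =>
      intro Γ' p
      rcases pull_fill_inv c p with ⟨c', hc, rfl⟩ | ⟨Λ', pΛ, rfl⟩ |
        ⟨cp, B0, Δs, Δh, Λ₁, Λ₂, E, T, hΛ, hΓ, hf⟩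
      · exact .id (pull_diaEmpty (cpull_pull hc _) hE)
      · cases pΛ with
        | cons p' => cases p' with | cons p'' => cases p''
      · exfalso
        have hm : AElem.dia E T ∈ Λ₁ ++ AElem.dia E T :: Λ₂ := by simp
        rw [← hΛ] at hm
        simp at hm
  | @and c₁ c₂ c A B s₁ s₂ m h₁ h₂ ih₁ ih₂ =>
      intro Γ' p
      rcases pull_fill_inv c p with ⟨c', hc, rfl⟩ | ⟨Λ', pΛ, rfl⟩ |
        ⟨cp, B0, Δs, Δh, Λ₁, Λ₂, E, T, hΛ, hΓ, hf⟩
      · obtain ⟨c₁', c₂', hc₁, hc₂, m'⟩ := cpull_merge m hc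
        exact .and m' (ih₁ (cpull_pull hc₁ _)) (ih₂ (cpull_pull hc₂ _))
      · cases pΛ with
        | cons p' => cases p'
      · exfalso
        have hm : AElem.dia E T ∈ Λ₁ ++ AElem.dia E T :: Λ₂ := by simp
        rw [← hΛ] at hm
        simp at hm
  | @or c A B s₁ s₂ h ih =>
      intro Γ' p
      rcases pull_fill_inv c p with ⟨c', hc, rfl⟩ | ⟨Λ', pΛ, rfl⟩ |
        ⟨cp, B0, Δs, Δh, Λ₁, Λ₂, E, T, hΛ, hΓ, hf⟩
      · exact .or (ih (cpull_pull hc _))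
      · cases pΛ with
        | cons p' => cases p'
      · exfalso
        have hm : AElem.dia E T ∈ Λ₁ ++ AElem.dia E T :: Λ₂ := by simp
        rw [← hΛ] at hm
        simp at hm
  | @box c A S s h ih =>
      intro Γ' p
      rcases pull_fill_inv c p with ⟨c', hc, rfl⟩ | ⟨Λ', pΛ, rfl⟩ |
        ⟨cp, B0, Δs, Δh, Λ₁, Λ₂, E, T, hΛ, hΓ, hf⟩
      · exact .box (ih (cpull_pull hc _))
      · cases pΛ with
        | cons p' => cases p'
      · exfalso
        have hm : AElem.dia E T ∈ Λ₁ ++ AElem.dia E T :: Λ₂ := by simp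
        rw [← hΛ] at hm
        simp at hm
  | @cut c₁ c₂ c A s₁ s₂ hP m h₁ h₂ ih₁ ih₂ =>
      intro Γ' p
      rcases pull_fill_inv c p with ⟨c', hc, rfl⟩ | ⟨Λ', pΛ, rfl⟩ |
        ⟨cp, B0, Δs, Δh, Λ₁, Λ₂, E, T, hΛ, hΓ, hf⟩
      · obtain ⟨c₁', c₂', hc₁, hc₂, m'⟩ := cpull_merge m hc
        exact .cut hP m' (ih₁ (cpull_pull hc₁ _)) (ih₂ (cpull_pull hc₂ _))
      · cases pΛ
      · exfalso
        have hm : AElem.dia E T ∈ Λ₁ ++ AElem.dia E T :: Λ₂ := by simp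
        rw [← hΛ] at hm
        simp at hm
  | @exch Γ₀ Δ₀ e h ih =>
      intro Γ' p
      obtain ⟨Γ₀', p₀, e'⟩ := aequiv_pull e p
      exact .exch e' (ih p₀)
  | @dia c d A B S s Δ' hprem ih =>
      intro Γ' p
      rcases pull_fill_inv c p with ⟨c', hc, rfl⟩ | ⟨M', pM, rfl⟩ |
        ⟨cp, B0, Δs, Δh, Λ₁, Λ₂, E, T, hΛ, hΓ, hf⟩
      · exact .dia (ih (cpull_pull hc _))
      · rcases pull_append_split pM with ⟨K, pK, rfl⟩ | ⟨W', pW, rfl⟩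
        · rcases pull_fill_inv d pK with ⟨d', hd, rfl⟩ | ⟨Z', pZ, rfl⟩ |
            ⟨cp, B0, Δs, Δh, Λ₁, Λ₂, E, T, hZ, hΓ, hf⟩
          · exact .dia (ih (pull_fill (pull_appendR (cpull_pull hd _) _) c))
          · cases pZ with
            | @here _ E T Θ₁ Θ₂ _ =>
                have pprem :
                    Pull (c.fill (d.fill [.nest B (emb A s :: (Θ₁ ++ .dia E T :: Θ₂))]
                          ++ [.dia A S]))
                      (c.fill (d.fill [.nest B (emb A s :: (Θ₁ ++ Θ₂)), .dia E T]
                          ++ [.dia A S])) :=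
                  pull_fill (pull_appendR (pull_fill
                    (Pull.here (B := B) (E := E) (T := T)
                      (Θ₁ := emb A s :: Θ₁) (Θ₂ := Θ₂) (Λ := [])) d) _) c
                have h1 := ih pprem
                have h2 : ADeriv P (c.fill ((d.happ [.dia E T]).fill
                    [.nest B (emb A s :: (Θ₁ ++ Θ₂))] ++ [.dia A S])) :=
                  .exch (fillCong c (AEquiv.appendR _
                    (AEquiv.symm (happ_fill d [.dia E T] _)))) h1
                have h3 := ADeriv.dia h2
                exact .exch (fillCong c (AEquiv.appendR _ (happ_fill d [.dia E T] _))) h3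
            | cons p'' => cases p''
            | nest p'' =>
                exact .dia (ih (pull_fill (pull_appendR
                  (pull_fill (Pull.nest (.cons p'')) d) _) c))
          · exfalso
            have hm : AElem.dia E T ∈ Λ₁ ++ AElem.dia E T :: Λ₂ := by simp
            rw [← hZ] at hm
            simp at hm
        · cases pW with
          | cons p' => cases p'
      · rcases list_split hΛ with ⟨y', h1, h2⟩ | ⟨x', h1, h2⟩
        · -- (3b) the pulled diamond is a top-level element of `d.fill [.nest B Δ']`
          rcases splitTop h1 with ⟨dd, del, hfill⟩ | ⟨Δh', Z₁, Z₂, hch, hmem, _, _⟩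
          · obtain ⟨Ξ₁, Ξ₂, hd1, hd2⟩ := delTop_fill del [.nest B (emb A s :: Δ')]
            have hsrc : d.fill [.nest B (emb A s :: Δ')] ++ [.dia A S]
                = Ξ₁ ++ .dia E T :: (Ξ₂ ++ [.dia A S]) := by
              rw [hd1]; simp
            have pprem := hf E T Ξ₁ (Ξ₂ ++ [.dia A S])
            rw [← hsrc] at pprem
            have h1' := ih pprem
            have hx : Ξ₁ ++ (Ξ₂ ++ [AElem.dia A S])
                = dd.fill [.nest B (emb A s :: Δ')] ++ [AElem.dia A S] := by
              rw [hd2, List.append_assoc]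
            rw [hx] at h1'
            have h2' : ADeriv P ((cp.comp (.nest B0 (.dia E T :: Δs) (.hole Δh))).fill
                (dd.fill [.nest B (emb A s :: Δ')] ++ [.dia A S])) :=
              .exch (AEquiv.symm (comp_fill cp _ _)) h1'
            have h3' := ADeriv.dia h2'
            have hy : Λ₁ ++ Λ₂ = dd.fill [.nest B Δ'] ++ [AElem.dia A (insert B S)] := by
              rw [h2, hfill, List.append_assoc]
            rw [hΓ, hy]
            refine .exch ?_ h3'
            simpa only [ACtx.fill] using comp_fill cp (.nest B0 (.dia E T :: Δs) (.hole Δh))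
              (dd.fill [.nest B Δ'] ++ [.dia A (insert B S)])
          · exfalso
            have hm : AElem.dia E T ∈ Z₁ ++ AElem.dia E T :: Z₂ := by simp
            rw [← hmem] at hm
            simp at hm
        · -- (3a) the pulled diamond is the principal diamond itself
          cases x' with
          | cons x₀ x'' => simp at h1
          | nil =>
              simp only [List.nil_append, List.cons.injEq] at h1
              obtain ⟨h1a, h1b⟩ := h1
              cases h1a
              subst h1b
              simp only [List.append_nil] at h2
              subst h2
              have key : ∀ (Z : ASeq) (w : AElem),
                  AEquiv (cp.fill ((ACtx.nest B0 Δs (ACtx.prep Δh d)).fill Z ++ [w]))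
                    (cp.fill (.nest B0 (Δh ++ (d.fill Z ++ [])) :: w :: Δs)) := by
                intro Z w
                refine fillCong cp ?_
                show AEquiv (.nest B0 ((ACtx.prep Δh d).fill Z) :: (Δs ++ [w])) _
                refine .consNest ?_ (emid Δs w)
                simpa using prep_fill Δh d Z
              have pprem := hf A S (d.fill [.nest B (emb A s :: Δ')]) []
              have h1' := ih pprem
              have h2' := ADeriv.exch (AEquiv.symm (key [.nest B (emb A s :: Δ')] (.dia A S))) h1'
              have h3' := ADeriv.dia h2'
              rw [hΓ]
              exact .exch (key [.nest B Δ'] (.dia A (insert B S))) h3'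

theorem cherry_aux {P : Formula → Prop} (E : Formula) (T : Finset Formula) :
    ∀ (d c : ACtx), ADeriv P (c.fill (d.fill [.dia E T])) →
      ADeriv P (c.fill (d.fill [] ++ [.dia E T])) := by
  intro d
  induction d with
  | hole Δ =>
      intro c h
      simpa only [ACtx.fill, List.append_nil] using h
  | nest B Δ d ih =>
      intro c h
      have e1 : AEquiv ((c.comp (.nest B Δ (.hole []))).fill (d.fill [.dia E T]))
          (c.fill (.nest B (d.fill [.dia E T]) :: Δ)) := by
        simpa only [ACtx.fill, List.nil_append] using
          comp_fill c (.nest B Δ (.hole [])) (d.fill [.dia E T])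
      have h2 : ADeriv P ((c.comp (.nest B Δ (.hole []))).fill (d.fill [.dia E T])) :=
        .exch (AEquiv.symm e1)
          (show ADeriv P (c.fill (.nest B (d.fill [.dia E T]) :: Δ)) from h)
      have h3 := ih (c.comp (.nest B Δ (.hole []))) h2
      have e2 : AEquiv ((c.comp (.nest B Δ (.hole []))).fill (d.fill [] ++ [.dia E T]))
          (c.fill (.nest B (d.fill [] ++ [.dia E T]) :: Δ)) := by
        simpa only [ACtx.fill, List.nil_append] using
          comp_fill c (.nest B Δ (.hole [])) (d.fill [] ++ [.dia E T])
      have h4 := ADeriv.exch e2 h3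
      have p : Pull (c.fill (.nest B (d.fill [] ++ [.dia E T]) :: Δ))
          (c.fill (.nest B (d.fill [] ++ []) :: .dia E T :: Δ)) :=
        pull_fill (Pull.here (Θ₁ := d.fill []) (Θ₂ := [])) c
      have h5 := pull_adm h4 p
      show ADeriv P (c.fill (.nest B (d.fill []) :: Δ ++ [.dia E T]))
      exact .exch (fillCong c (by
        simp only [List.append_nil, List.cons_append]
        exact .cons (by simpa using AEquiv.mid (.dia E T) Δ []))) h5

/-- the cherry-pick rule is admissible in the annotated calculus
with cuts on `A`. -/
theorem cherry_pick_admissible (A : Formula) (c d : ACtx) (S : Finset Formula)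
    (h : ADeriv (· = A) (c.fill (d.fill [.dia A.negate S]))) :
    ADeriv (· = A) (c.fill (d.fill [] ++ [.dia A.negate S])) := by
  exact cherry_aux A.negate S d c h
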